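/- Let ν > 0 be real and not an integer, put k_ν = ⌊ν/2 − 1/2⌋ and μ̃ = ν − 2k_ν − 2, and let B(μ̃,ν) = 2^{1−μ̃} Γ(ν/2 − μ̃/2 + 1/2) / (π Γ(ν/2 + μ̃/2 + 1/2)). Then for every z in the cut plane ℂ ∖ (−∞,0]: 𝐇_ν(z) = B(μ̃,ν) S^{(0)}_{μ̃,ν}(z) + p_ν(z). -/

import Mathlib

/-- Bessel function of the first kind,
`J_ν(z) = Σ_{k=0}^∞ (-1)^k (z/2)^(ν+2k) / (k! Γ(ν+k+1))` (principal powers). -/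
noncomputable def besselJ (ν z : ℂ) : ℂ :=
  ∑' k : ℕ, (-1 : ℂ) ^ k * (z / 2) ^ (ν + 2 * (k : ℂ)) /
    ((k.factorial : ℂ) * Complex.Gamma (ν + (k : ℂ) + 1))

/-- Bessel function of the second kind (noninteger order),
`Y_ν(z) = (J_ν(z) cos(νπ) - J_{-ν}(z)) / sin(νπ)`. -/
noncomputable def besselY (ν z : ℂ) : ℂ :=
  (besselJ ν z * Complex.cos (ν * (Real.pi : ℂ)) - besselJ (-ν) z) /
    Complex.sin (ν * (Real.pi : ℂ))

/-- `a_k(μ,ν) = Π_{m=1}^{k} ((μ+2m-1)² - ν²)`. -/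
noncomputable def lommelCoeff (μ ν : ℂ) (k : ℕ) : ℂ :=
  ∏ m ∈ Finset.range k, ((μ + 2 * ((m : ℂ) + 1) - 1) ^ 2 - ν ^ 2)

/-- The Lommel function `s_{μ,ν}(z) = z^(μ+1) Σ_{k=0}^∞ (-1)^k z^(2k) / a_{k+1}(μ,ν)`. -/
noncomputable def lommels (μ ν z : ℂ) : ℂ :=
  z ^ (μ + 1) * ∑' k : ℕ, (-1 : ℂ) ^ k * z ^ (2 * k) / lommelCoeff μ ν (k + 1)

/-- `A(μ,ν) = 2^(μ-1) Γ(μ/2+ν/2+1/2) Γ(μ/2-ν/2+1/2)`. -/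
noncomputable def lommelA (μ ν : ℂ) : ℂ :=
  (2 : ℂ) ^ (μ - 1) * Complex.Gamma (μ / 2 + ν / 2 + 1 / 2) *
    Complex.Gamma (μ / 2 - ν / 2 + 1 / 2)

/-- The Lommel function
`S_{μ,ν}(z) = s_{μ,ν}(z) + A(μ,ν){sin((μ-ν)π/2) J_ν(z) - cos((μ-ν)π/2) Y_ν(z)}`. -/
noncomputable def lommelS (μ ν z : ℂ) : ℂ :=
  lommels μ ν z + lommelA μ ν *
    (Complex.sin ((μ - ν) * (Real.pi : ℂ) / 2) * besselJ ν z -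
      Complex.cos ((μ - ν) * (Real.pi : ℂ) / 2) * besselY ν z)

/-- `S^(0)_{μ,ν}(z) = s_{μ,ν}(z) + A(μ,ν) sin((μ-ν)π/2) J_ν(z)`. -/
noncomputable def lommelS0 (μ ν z : ℂ) : ℂ :=
  lommels μ ν z + lommelA μ ν * Complex.sin ((μ - ν) * (Real.pi : ℂ) / 2) * besselJ ν z

/-- `S^(1)_{μ,ν}(z) = s_{μ,ν}(z) - i e^((μ-ν)πi/2) A(μ,ν) J_ν(z)`. -/
noncomputable def lommelS1 (μ ν z : ℂ) : ℂ :=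
  lommels μ ν z - Complex.I * Complex.exp ((μ - ν) * (Real.pi : ℂ) * Complex.I / 2) *
    lommelA μ ν * besselJ ν z

/-- `S^(2)_{μ,ν}(z) = s_{μ,ν}(z) + i e^((ν-μ)πi/2) A(μ,ν) J_ν(z)`. -/
noncomputable def lommelS2 (μ ν z : ℂ) : ℂ :=
  lommels μ ν z + Complex.I * Complex.exp ((ν - μ) * (Real.pi : ℂ) * Complex.I / 2) *
    lommelA μ ν * besselJ ν z

/-- The Struve function
`𝐇_ν(z) = (z/2)^(ν+1) Σ_{k=0}^∞ (-1)^k (z/2)^(2k)/(Γ(k+3/2) Γ(k+ν+3/2))`. -/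
noncomputable def struveH (ν z : ℂ) : ℂ :=
  (z / 2) ^ (ν + 1) * ∑' k : ℕ, (-1 : ℂ) ^ k * (z / 2) ^ (2 * k) /
    (Complex.Gamma ((k : ℂ) + 3 / 2) * Complex.Gamma ((k : ℂ) + ν + 3 / 2))

/-- `k_ν = ⌊ν/2 - 1/2⌋`. -/
noncomputable def kIdx (ν : ℝ) : ℤ := ⌊ν / 2 - 1 / 2⌋

/-- `μ̃ = ν - 2 k_ν - 2`, so `-1 ≤ μ̃ < 1`. -/
noncomputable def muTilde (ν : ℝ) : ℝ := ν - 2 * (kIdx ν : ℝ) - 2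

/-- `p_ν(z) = (1/π) Σ_{k=0}^{k_ν} Γ(k+1/2) (z/2)^(ν-2k-1) / Γ(ν+1/2-k)` (empty sum is `0`). -/
noncomputable def pStruve (ν : ℝ) (z : ℂ) : ℂ :=
  (1 / (Real.pi : ℂ)) * ∑ k ∈ Finset.range (kIdx ν + 1).toNat,
    Complex.Gamma ((k : ℂ) + 1 / 2) * (z / 2) ^ ((ν : ℂ) - 2 * (k : ℂ) - 1) /
      Complex.Gamma ((ν : ℂ) + 1 / 2 - (k : ℂ))

/-- `B(μ̃,ν) = 2^(1-μ̃) Γ(ν/2-μ̃/2+1/2) / (π Γ(ν/2+μ̃/2+1/2))`. -/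
noncomputable def Bcoef (ν : ℝ) : ℂ :=
  (2 : ℂ) ^ ((1 : ℂ) - (muTilde ν : ℂ)) *
    Complex.Gamma ((ν : ℂ) / 2 - (muTilde ν : ℂ) / 2 + 1 / 2) /
    ((Real.pi : ℂ) * Complex.Gamma ((ν : ℂ) / 2 + (muTilde ν : ℂ) / 2 + 1 / 2))

section StruveAux

open Complex Finset

lemma gamma_cast_ne {x : ℂ} (hx : 0 < x.re) : Complex.Gamma x ≠ 0 :=
  Complex.Gamma_ne_zero_of_re_pos hx

lemma two_cpow_add_two (c : ℂ) : (2:ℂ)^(c+2) = 2^c * 4 := by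
  rw [Complex.cpow_add _ _ two_ne_zero]; norm_num

lemma gamma_half_sq : Complex.Gamma (1/2) * Complex.Gamma (1/2) = (Real.pi : ℂ) := by
  rw [Complex.Gamma_one_half_eq,
    ← Complex.cpow_add _ _ (Complex.ofReal_ne_zero.mpr Real.pi_ne_zero)]
  norm_num

lemma ofReal_two_mul_cpow {w : ℂ} (hw : w ≠ 0) (c : ℂ) :
    (((2:ℝ):ℂ) * w) ^ c = ((2:ℝ):ℂ) ^ c * w ^ c := by
  rw [Complex.cpow_def_of_ne_zero (mul_ne_zero (by norm_num) hw),
    Complex.log_ofReal_mul (by norm_num) hw, add_mul, Complex.exp_add,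
    Complex.cpow_def_of_ne_zero (by norm_num : ((2:ℝ):ℂ) ≠ 0),
    Complex.cpow_def_of_ne_zero hw, Complex.ofReal_log (by norm_num : (0:ℝ) ≤ 2)]

lemma lommelCoeff_succ (μ ν : ℂ) (k : ℕ) :
    lommelCoeff μ ν (k+1) = lommelCoeff μ ν k * ((μ + 2*((k:ℂ)+1) - 1)^2 - ν^2) := by
  unfold lommelCoeff; rw [Finset.prod_range_succ]

lemma lommelCoeff_shift (μ ν : ℂ) (k : ℕ) :
    lommelCoeff (μ - 2) ν (k+1) = ((μ - 1)^2 - ν^2) * lommelCoeff μ ν k := by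
  unfold lommelCoeff
  rw [Finset.prod_range_succ', mul_comm]
  congr 1
  · push_cast; ring_nf
  · apply Finset.prod_congr rfl; intro m _; push_cast; ring_nf

end StruveAux
section StruveCore
open Complex Finset

lemma core_id {ν : ℝ} (hν : 0 < ν) : ∀ n : ℕ, 2*(n:ℝ) ≤ ν + 1 →
    (2:ℂ)^((1:ℂ) - ((ν:ℂ) - 2*n)) * Complex.Gamma ((n:ℂ) + 1/2) * (-1)^n *
      (2:ℂ)^((ν:ℂ)+1) * Complex.Gamma (3/2) * Complex.Gamma ((ν:ℂ)+3/2)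
    = (Real.pi:ℂ) * Complex.Gamma ((ν:ℂ) - n + 1/2) * lommelCoeff ((ν:ℂ) - 2*n) ν (n+1) := by
  intro n
  induction n with
  | zero =>
    intro _
    have h2 : (2:ℂ)^((1:ℂ) - (ν:ℂ)) * (2:ℂ)^((ν:ℂ)+1) = 4 := by
      rw [← Complex.cpow_add _ _ two_ne_zero,
        show ((1:ℂ) - (ν:ℂ) + ((ν:ℂ)+1)) = 2 by ring]
      norm_num
    have hν12 : ((ν:ℂ)+1/2) ≠ 0 := by
      rw [show ((ν:ℂ)+1/2) = ((ν+1/2 : ℝ):ℂ) by push_cast; ring, Complex.ofReal_ne_zero]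
      positivity
    have hΓν : Complex.Gamma ((ν:ℂ)+3/2) = ((ν:ℂ)+1/2) * Complex.Gamma ((ν:ℂ)+1/2) := by
      rw [show ((ν:ℂ)+3/2) = ((ν:ℂ)+1/2) + 1 by ring, Complex.Gamma_add_one _ hν12]
    have hΓ32 : Complex.Gamma (3/2 : ℂ) = (1/2) * Complex.Gamma (1/2) := by
      rw [show ((3:ℂ)/2) = (1/2 : ℂ) + 1 by ring, Complex.Gamma_add_one _ (by norm_num)]
    have hL : lommelCoeff ((ν:ℂ)) ν 1 = 2*(ν:ℂ)+1 := by
      unfold lommelCoeff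
      rw [Finset.prod_range_one]
      push_cast; ring
    have hπ := gamma_half_sq
    simp only [Nat.cast_zero, mul_zero, sub_zero, Nat.cast_ofNat, zero_add]
    rw [hΓν, hΓ32, hL]
    linear_combination ((2*(ν:ℂ)+1) * Complex.Gamma ((ν:ℂ)+1/2)) * hπ
      + (Complex.Gamma (1/2) * (1/2) * Complex.Gamma (1/2) * ((ν:ℂ)+1/2)
          * Complex.Gamma ((ν:ℂ)+1/2)) * h2
  | succ n IH =>
    intro h
    have IH' := IH (by push_cast at h ⊢; linarith)
    have hνn : (0:ℝ) < ν - n - 1/2 := by push_cast at h; linarith [hν]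
    have hΓ1 : Complex.Gamma (((n:ℂ)+1) + 1/2) = ((n:ℂ)+1/2) * Complex.Gamma ((n:ℂ)+1/2) := by
      rw [show (((n:ℂ))+1+1/2) = ((n:ℂ)+1/2) + 1 by push_cast; ring,
        Complex.Gamma_add_one _ (by
          rw [show ((n:ℂ)+1/2) = (((n:ℝ)+1/2 : ℝ):ℂ) by push_cast; ring, Complex.ofReal_ne_zero]
          positivity)]
    have hΓ2 : Complex.Gamma ((ν:ℂ) - n + 1/2)
        = ((ν:ℂ) - n - 1/2) * Complex.Gamma ((ν:ℂ) - n - 1/2) := by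
      rw [show ((ν:ℂ) - n + 1/2) = ((ν:ℂ) - n - 1/2) + 1 by ring,
        Complex.Gamma_add_one _ (by
          rw [show ((ν:ℂ) - n - 1/2) = ((ν - n - 1/2 : ℝ):ℂ) by push_cast; ring,
            Complex.ofReal_ne_zero]
          exact ne_of_gt hνn)]
    have hcp : (2:ℂ)^((1:ℂ) - ((ν:ℂ) - 2*((n:ℂ)+1)))
        = (2:ℂ)^((1:ℂ) - ((ν:ℂ) - 2*(n:ℂ))) * 4 := by
      rw [show ((1:ℂ) - ((ν:ℂ) - 2*((n:ℂ)+1))) = ((1:ℂ) - ((ν:ℂ) - 2*(n:ℂ))) + 2 by ring]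
      exact two_cpow_add_two _
    have hprod : lommelCoeff ((ν:ℂ) - 2*((n:ℂ)+1)) ν (n+2)
        = (((ν:ℂ)-2*n-1)^2 - (ν:ℂ)^2) * lommelCoeff ((ν:ℂ) - 2*(n:ℂ)) ν (n+1) := by
      rw [show ((ν:ℂ) - 2*((n:ℂ)+1)) = ((ν:ℂ) - 2*(n:ℂ)) - 2 by ring, lommelCoeff_shift]

    rw [hΓ2] at IH'
    push_cast
    rw [show ((ν:ℂ) - ((n:ℂ) + 1) + 1 / 2) = ((ν:ℂ) - (n:ℂ) - 1/2) by ring]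
    rw [hΓ1, hcp, hprod]
    linear_combination (-(4*(n:ℂ)+2)) * IH'
end StruveCore
section StruveE
open Complex Finset

lemma E1_id {ν : ℝ} (hν : 0 < ν) (N : ℕ) (h2N : 2*(N:ℝ) ≤ ν + 1) : ∀ k : ℕ,
    (2:ℂ)^((1:ℂ) - ((ν:ℂ) - 2*N)) * Complex.Gamma ((N:ℂ) + 1/2) * (-1)^N *
      (2:ℂ)^((ν:ℂ)+1) * (4:ℂ)^k * Complex.Gamma ((k:ℂ) + 3/2) * Complex.Gamma ((k:ℂ) + ν + 3/2)
    = (Real.pi:ℂ) * Complex.Gamma ((ν:ℂ) - N + 1/2) * lommelCoeff ((ν:ℂ) - 2*N) ν (N+k+1) := by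
  intro k
  induction k with
  | zero =>
    have h := core_id hν N h2N
    simp only [Nat.cast_zero, zero_add, pow_zero, mul_one]
    calc (2:ℂ)^((1:ℂ) - ((ν:ℂ) - 2*N)) * Complex.Gamma ((N:ℂ) + 1/2) * (-1)^N *
          (2:ℂ)^((ν:ℂ)+1) * Complex.Gamma (3/2) * Complex.Gamma ((ν:ℂ) + 3/2)
        = (2:ℂ)^((1:ℂ) - ((ν:ℂ) - 2*N)) * Complex.Gamma ((N:ℂ) + 1/2) * (-1)^N *
          (2:ℂ)^((ν:ℂ)+1) * Complex.Gamma (3/2) * Complex.Gamma ((ν:ℂ)+3/2) := by ring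
      _ = (Real.pi:ℂ) * Complex.Gamma ((ν:ℂ) - N + 1/2) * lommelCoeff ((ν:ℂ) - 2*N) ν (N+0+1) :=
          by rw [h]
  | succ k IH =>
    have hk32 : ((k:ℂ)+3/2) ≠ 0 := by
      rw [show ((k:ℂ)+3/2) = (((k:ℝ)+3/2 : ℝ):ℂ) by push_cast; ring, Complex.ofReal_ne_zero]
      positivity
    have hkν : ((k:ℂ)+ν+3/2) ≠ 0 := by
      rw [show ((k:ℂ)+ν+3/2) = (((k:ℝ)+ν+3/2 : ℝ):ℂ) by push_cast; ring, Complex.ofReal_ne_zero]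
      positivity
    have hΓ1 : Complex.Gamma (((k:ℂ)+1) + 3/2) = ((k:ℂ)+3/2) * Complex.Gamma ((k:ℂ)+3/2) := by
      rw [show (((k:ℂ))+1+3/2) = ((k:ℂ)+3/2) + 1 by ring, Complex.Gamma_add_one _ hk32]
    have hΓ2 : Complex.Gamma (((k:ℂ)+1) + ν + 3/2)
        = ((k:ℂ)+ν+3/2) * Complex.Gamma ((k:ℂ)+ν+3/2) := by
      rw [show (((k:ℂ))+1+ν+3/2) = ((k:ℂ)+ν+3/2) + 1 by ring, Complex.Gamma_add_one _ hkν]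
    have hprod : lommelCoeff ((ν:ℂ) - 2*N) ν (N+(k+1)+1)
        = lommelCoeff ((ν:ℂ) - 2*N) ν (N+k+1)
          * (((ν:ℂ) - 2*N + 2*(((N+k+1 : ℕ):ℂ)+1) - 1)^2 - (ν:ℂ)^2) := by
      rw [show N+(k+1)+1 = (N+k+1)+1 by ring, lommelCoeff_succ]
    push_cast
    push_cast at hprod
    rw [hΓ1, hΓ2, hprod, pow_succ]
    linear_combination ((2*(k:ℂ)+3) * (2*(ν:ℂ)+2*(k:ℂ)+3)) * IH

end StruveE
section StruveE2
open Complex Finset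

lemma E2_id {ν : ℝ} (hν : 0 < ν) (N : ℕ) (h2N : 2*(N:ℝ) ≤ ν + 1) : ∀ i : ℕ, i < N →
    (2:ℂ)^((1:ℂ) - ((ν:ℂ) - 2*N)) * Complex.Gamma ((N:ℂ) + 1/2) * (-1)^(N-1-i) *
      (2:ℂ)^((ν:ℂ) - 2*i - 1) * Complex.Gamma ((ν:ℂ) + 1/2 - i)
    = -(Complex.Gamma ((ν:ℂ) - N + 1/2) * lommelCoeff ((ν:ℂ) - 2*N) ν (N-i)
        * Complex.Gamma ((i:ℂ) + 1/2)) := by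
  intro i
  induction i with
  | zero =>
    intro hi
    have hE := E1_id hν N h2N 0
    simp only [Nat.cast_zero, zero_add, pow_zero, mul_one, mul_zero, sub_zero,
      Nat.sub_zero, Nat.add_zero] at hE ⊢
    have hν12 : ((ν:ℂ)+1/2) ≠ 0 := by
      rw [show ((ν:ℂ)+1/2) = ((ν+1/2 : ℝ):ℂ) by push_cast; ring, Complex.ofReal_ne_zero]
      positivity
    have hΓν : Complex.Gamma ((ν:ℂ)+3/2) = ((ν:ℂ)+1/2) * Complex.Gamma ((ν:ℂ)+1/2) := by
      rw [show ((ν:ℂ)+3/2) = ((ν:ℂ)+1/2) + 1 by ring, Complex.Gamma_add_one _ hν12]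
    have hΓ32 : Complex.Gamma (3/2 : ℂ) = (1/2) * Complex.Gamma (1/2) := by
      rw [show ((3:ℂ)/2) = (1/2 : ℂ) + 1 by ring, Complex.Gamma_add_one _ (by norm_num)]
    have hπ := gamma_half_sq
    have hprod : lommelCoeff ((ν:ℂ) - 2*N) ν (N+1)
        = lommelCoeff ((ν:ℂ) - 2*N) ν N * (((ν:ℂ)+1)^2 - (ν:ℂ)^2) := by
      rw [lommelCoeff_succ]
      congr 2
      push_cast; ring
    have hNpow : ((-1:ℂ))^N = (-1)^(N-1) * (-1) := by
      rw [← pow_succ]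
      congr 1
      omega
    have hcp : (2:ℂ)^((ν:ℂ)+1) = (2:ℂ)^((ν:ℂ)-1) * 4 := by
      rw [show ((ν:ℂ)+1) = ((ν:ℂ)-1)+2 by ring, two_cpow_add_two]
    rw [hΓν, hΓ32, hprod, hNpow, hcp] at hE
    have hne : ((2*(ν:ℂ)+1) * Complex.Gamma (1/2)) ≠ 0 := by
      apply mul_ne_zero
      · rw [show (2*(ν:ℂ)+1) = ((2*ν+1 : ℝ):ℂ) by push_cast; ring, Complex.ofReal_ne_zero]
        positivity
      · exact gamma_cast_ne (by norm_num)
    apply mul_left_cancel₀ hne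
    linear_combination (-1:ℂ) * hE + (2*(ν:ℂ)+1) * Complex.Gamma ((ν:ℂ) - N + 1/2)
      * lommelCoeff ((ν:ℂ) - 2*N) ν N * hπ
  | succ i ih =>
    intro hi
    have IH := ih (by omega)
    have hi2 : (i:ℝ) + 2 ≤ N := by exact_mod_cast Nat.succ_le_of_lt hi
    have hνi : (0:ℝ) < ν - i - 1/2 := by linarith
    have hpow : ((-1:ℂ))^(N-1-i) = (-1)^(N-1-(i+1)) * (-1) := by
      rw [← pow_succ]
      congr 1
      omega
    have hcp : (2:ℂ)^((ν:ℂ)-2*i-1) = (2:ℂ)^((ν:ℂ)-2*((i:ℂ)+1)-1) * 4 := by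
      rw [show ((ν:ℂ)-2*(i:ℂ)-1) = ((ν:ℂ)-2*((i:ℂ)+1)-1)+2 by ring, two_cpow_add_two]
    have hcast : (((N-(i+1)) : ℕ):ℂ) = (N:ℂ) - (i:ℂ) - 1 := by
      have : (((N-(i+1)) : ℕ):ℝ) = (N:ℝ) - (i:ℝ) - 1 := by
        rw [Nat.cast_sub (by omega)]
        push_cast; ring
      calc (((N-(i+1)) : ℕ):ℂ) = (((((N-(i+1)) : ℕ)):ℝ):ℂ) := by push_cast; ring
        _ = (N:ℂ) - (i:ℂ) - 1 := by rw [this]; push_cast; ring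
    have hprod : lommelCoeff ((ν:ℂ) - 2*N) ν (N-i)
        = lommelCoeff ((ν:ℂ) - 2*N) ν (N-(i+1)) * (((ν:ℂ)-2*i-1)^2 - (ν:ℂ)^2) := by
      rw [show N-i = (N-(i+1))+1 by omega, lommelCoeff_succ]
      congr 2
      rw [hcast]; push_cast; ring
    have hΓi : Complex.Gamma (((i:ℂ)+1) + 1/2) = ((i:ℂ)+1/2) * Complex.Gamma ((i:ℂ)+1/2) := by
      rw [show (((i:ℂ))+1+1/2) = ((i:ℂ)+1/2) + 1 by ring,
        Complex.Gamma_add_one _ (by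
          rw [show ((i:ℂ)+1/2) = (((i:ℝ)+1/2 : ℝ):ℂ) by push_cast; ring, Complex.ofReal_ne_zero]
          positivity)]
    have hΓν : Complex.Gamma ((ν:ℂ) + 1/2 - i)
        = ((ν:ℂ) - i - 1/2) * Complex.Gamma ((ν:ℂ) - i - 1/2) := by
      rw [show ((ν:ℂ) + 1/2 - i) = ((ν:ℂ) - i - 1/2) + 1 by ring,
        Complex.Gamma_add_one _ (by
          rw [show ((ν:ℂ) - i - 1/2) = ((ν - i - 1/2 : ℝ):ℂ) by push_cast; ring,
            Complex.ofReal_ne_zero]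
          exact ne_of_gt hνi)]
    rw [hpow, hcp, hprod, hΓν] at IH
    push_cast
    push_cast at IH
    rw [show ((ν:ℂ) + 1/2 - ((i:ℂ)+1)) = ((ν:ℂ) - (i:ℂ) - 1/2) by ring, hΓi]
    have hne : ((-2)*(2*(ν:ℂ)-2*(i:ℂ)-1)) ≠ 0 := by
      apply mul_ne_zero (by norm_num)
      rw [show (2*(ν:ℂ)-2*(i:ℂ)-1) = ((2*ν-2*i-1 : ℝ):ℂ) by push_cast; ring,
        Complex.ofReal_ne_zero]
      intro hc
      have : (0:ℝ) < 2*ν-2*(i:ℝ)-1 := by linarith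
      linarith [hc ▸ this]
    apply mul_left_cancel₀ hne
    linear_combination IH
end StruveE2
section StruveSum
open Complex Finset Filter

lemma summable_struve_terms (ν : ℝ) (hν : 0 < ν) (w : ℂ) :
    Summable (fun k : ℕ => (-1:ℂ)^k * w^(2*k) /
      (Complex.Gamma ((k:ℂ) + 3/2) * Complex.Gamma ((k:ℂ) + ν + 3/2))) := by
  set f : ℕ → ℂ := fun k => (-1:ℂ)^k * w^(2*k) /
      (Complex.Gamma ((k:ℂ) + 3/2) * Complex.Gamma ((k:ℂ) + ν + 3/2)) with hf
  apply summable_of_ratio_norm_eventually_le (r := 1/2) (by norm_num)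
  filter_upwards [Filter.eventually_ge_atTop ⌈2 * ‖w‖^2⌉₊] with k hk
  have hk32 : ((k:ℂ)+3/2) ≠ 0 := by
    rw [show ((k:ℂ)+3/2) = (((k:ℝ)+3/2 : ℝ):ℂ) by push_cast; ring, Complex.ofReal_ne_zero]
    positivity
  have hkν : ((k:ℂ)+ν+3/2) ≠ 0 := by
    rw [show ((k:ℂ)+ν+3/2) = (((k:ℝ)+ν+3/2 : ℝ):ℂ) by push_cast; ring, Complex.ofReal_ne_zero]
    positivity
  have hΓ1 : Complex.Gamma (((k:ℂ)+1) + 3/2) = ((k:ℂ)+3/2) * Complex.Gamma ((k:ℂ)+3/2) := by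
    rw [show (((k:ℂ))+1+3/2) = ((k:ℂ)+3/2) + 1 by ring, Complex.Gamma_add_one _ hk32]
  have hΓ2 : Complex.Gamma (((k:ℂ)+1) + ν + 3/2)
      = ((k:ℂ)+ν+3/2) * Complex.Gamma ((k:ℂ)+ν+3/2) := by
    rw [show (((k:ℂ))+1+ν+3/2) = ((k:ℂ)+ν+3/2) + 1 by ring, Complex.Gamma_add_one _ hkν]
  have hstep : f (k+1) = f k * (-(w^2) / (((k:ℂ)+3/2) * ((k:ℂ)+ν+3/2))) := by
    rw [hf]
    simp only []
    push_cast
    rw [hΓ1, hΓ2, pow_succ, show 2*(k+1) = 2*k+2 by ring, pow_add]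
    field_simp
  rw [hstep, norm_mul]
  have hnorm : ‖-(w^2) / (((k:ℂ)+3/2) * ((k:ℂ)+ν+3/2))‖
      = ‖w‖^2 / (((k:ℝ)+3/2) * ((k:ℝ)+ν+3/2)) := by
    rw [norm_div, norm_neg, norm_pow]
    congr 1
    rw [show (((k:ℂ)+3/2) * ((k:ℂ)+ν+3/2)) = ((((k:ℝ)+3/2) * ((k:ℝ)+ν+3/2) : ℝ):ℂ) by
      push_cast; ring]
    rw [Complex.norm_real]
    exact abs_of_pos (by positivity)
  rw [hnorm, mul_comm]
  have hkR : 2*‖w‖^2 ≤ (k:ℝ) := le_trans (Nat.le_ceil _) (by exact_mod_cast hk)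
  have h1 : (0:ℝ) < ((k:ℝ)+3/2) * ((k:ℝ)+ν+3/2) := by positivity
  have : ‖w‖^2 / (((k:ℝ)+3/2) * ((k:ℝ)+ν+3/2)) ≤ 1/2 := by
    rw [div_le_iff₀ h1]
    nlinarith [norm_nonneg w, sq_nonneg ‖w‖, Nat.cast_nonneg (α := ℝ) k]
  have hfk : (0:ℝ) ≤ ‖f k‖ := norm_nonneg _
  nlinarith [this, hfk]
end StruveSum
/-- For real noninteger `ν > 0`, with `k_ν = ⌊ν/2 - 1/2⌋` and `μ̃ = ν - 2k_ν - 2`: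
`𝐇_ν(z) = B(μ̃,ν) S^(0)_{μ̃,ν}(z) + p_ν(z)` on the cut plane. -/
theorem struveH_eq_lommelS0 (ν : ℝ) (hν : 0 < ν) (hint : ∀ n : ℤ, ν ≠ (n : ℝ)) :
    ∀ z ∈ Complex.slitPlane,
      struveH (ν : ℂ) z = Bcoef ν * lommelS0 ((muTilde ν : ℝ) : ℂ) (ν : ℂ) z + pStruve ν z := by
  intro z hz
  have hzne : z ≠ 0 := Complex.slitPlane_ne_zero hz
  have hwne : z / 2 ≠ 0 := div_ne_zero hzne two_ne_zero
  set N : ℕ := (kIdx ν + 1).toNat with hN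
  have hk1 : (-1 : ℤ) ≤ kIdx ν := by
    refine Int.le_floor.mpr ?_
    push_cast
    linarith
  have hNZ : ((N:ℤ)) = kIdx ν + 1 := Int.toNat_of_nonneg (by omega)
  have hNr : (N:ℝ) = (kIdx ν : ℝ) + 1 := by exact_mod_cast congrArg (Int.cast : ℤ → ℝ) hNZ
  have hfl : (kIdx ν : ℝ) ≤ ν/2 - 1/2 := Int.floor_le _
  have h2N : 2*(N:ℝ) ≤ ν + 1 := by rw [hNr]; linarith
  have hμ : ((muTilde ν : ℝ):ℂ) = (ν:ℂ) - 2*(N:ℂ) := by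
    have h : muTilde ν = ν - 2*(N:ℝ) := by unfold muTilde; rw [hNr]; ring
    rw [h]; push_cast; ring
  have hπ : (Real.pi : ℂ) ≠ 0 := Complex.ofReal_ne_zero.mpr Real.pi_ne_zero
  -- nonvanishing of lommelCoeff
  have hLC : ∀ K : ℕ, lommelCoeff ((ν:ℂ) - 2*(N:ℂ)) ν K ≠ 0 := by
    intro K
    unfold lommelCoeff
    refine Finset.prod_ne_zero_iff.mpr (fun m _ => ?_)
    have he : ((ν:ℂ) - 2*(N:ℂ) + 2*((m:ℂ)+1) - 1)^2 - (ν:ℂ)^2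
        = (((2*(m:ℝ)+1-2*N)*(2*ν-2*N+2*(m:ℝ)+1) : ℝ):ℂ) := by push_cast; ring
    rw [he, Complex.ofReal_ne_zero]
    apply mul_ne_zero
    · intro h
      have h' : ((2*(m:ℤ)+1-2*(N:ℤ) : ℤ):ℝ) = 0 := by push_cast; linarith
      have : (2*(m:ℤ)+1-2*(N:ℤ) : ℤ) = 0 := by exact_mod_cast h'
      omega
    · have hm : (0:ℝ) ≤ (m:ℝ) := Nat.cast_nonneg m
      exact ne_of_gt (by linarith)
  -- gamma nonvanishing
  have hΓb : Complex.Gamma ((ν:ℂ) - N + 1/2) ≠ 0 := by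
    rw [show ((ν:ℂ) - N + 1/2) = ((ν - N + 1/2 : ℝ):ℂ) by push_cast; ring]
    exact gamma_cast_ne (by rw [Complex.ofReal_re]; linarith)
  have hΓc : ∀ j : ℕ, Complex.Gamma ((j:ℂ) + 3/2) ≠ 0 := fun j => by
    rw [show ((j:ℂ) + 3/2) = (((j:ℝ) + 3/2 : ℝ):ℂ) by push_cast; ring]
    exact gamma_cast_ne (by rw [Complex.ofReal_re]; positivity)
  have hΓd : ∀ j : ℕ, Complex.Gamma ((j:ℂ) + ν + 3/2) ≠ 0 := fun j => by
    rw [show ((j:ℂ) + ν + 3/2) = (((j:ℝ) + ν + 3/2 : ℝ):ℂ) by push_cast; ring]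
    exact gamma_cast_ne (by rw [Complex.ofReal_re]; positivity)
  have hΓe : ∀ i : ℕ, (i:ℝ) < N → Complex.Gamma ((ν:ℂ) + 1/2 - i) ≠ 0 := fun i hi => by
    rw [show ((ν:ℂ) + 1/2 - i) = ((ν + 1/2 - i : ℝ):ℂ) by push_cast; ring]
    exact gamma_cast_ne (by rw [Complex.ofReal_re]; linarith)
  -- the sine term vanishes
  have hsin : Complex.sin ((((muTilde ν : ℝ):ℂ) - ν) * (Real.pi:ℂ) / 2) = 0 := by
    rw [show (((muTilde ν : ℝ):ℂ) - ν) * (Real.pi:ℂ) / 2 = ((-(N:ℤ) : ℤ):ℂ) * (Real.pi:ℂ) by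
      rw [hμ]; push_cast; ring]
    exact Complex.sin_int_mul_pi _
  have hS0 : lommelS0 ((muTilde ν : ℝ):ℂ) ν z = lommels ((muTilde ν : ℝ):ℂ) ν z := by
    unfold lommelS0
    rw [hsin]
    ring
  -- B coefficient in explicit form
  have hB : Bcoef ν = (2:ℂ)^((1:ℂ) - ((ν:ℂ) - 2*N)) * Complex.Gamma ((N:ℂ) + 1/2) /
      ((Real.pi:ℂ) * Complex.Gamma ((ν:ℂ) - N + 1/2)) := by
    unfold Bcoef
    rw [hμ, show (ν:ℂ)/2 - ((ν:ℂ) - 2*(N:ℂ))/2 + 1/2 = (N:ℂ) + 1/2 by ring,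
      show (ν:ℂ)/2 + ((ν:ℂ) - 2*(N:ℂ))/2 + 1/2 = (ν:ℂ) - N + 1/2 by ring]
  -- series terms
  set f : ℕ → ℂ := fun k => Bcoef ν * z^(((ν:ℂ) - 2*(N:ℂ))+1) *
      ((-1:ℂ)^k * z^(2*k) / lommelCoeff ((ν:ℂ) - 2*(N:ℂ)) ν (k+1)) with hf
  set T : ℕ → ℂ := fun j => (z/2)^((ν:ℂ)+1) * ((-1:ℂ)^j * (z/2)^(2*j) /
      (Complex.Gamma ((j:ℂ)+3/2) * Complex.Gamma ((j:ℂ)+ν+3/2))) with hT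
  -- z power identities
  have e3 : z^((ν:ℂ)+1) = (2:ℂ)^((ν:ℂ)+1) * (z/2)^((ν:ℂ)+1) := by
    have h := ofReal_two_mul_cpow hwne ((ν:ℂ)+1)
    rw [show (((2:ℝ):ℂ) * (z/2)) = z by push_cast; ring] at h
    rw [h]
    norm_num
  have e4 : ∀ j : ℕ, z^(2*j) = (4:ℂ)^j * (z/2)^(2*j) := by
    intro j
    rw [pow_mul, pow_mul, ← mul_pow]
    congr 1
    ring
  have hp1 : ∀ j : ℕ, z^(((ν:ℂ) - 2*(N:ℂ))+1) * z^(2*(j+N))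
      = (2:ℂ)^((ν:ℂ)+1) * (4:ℂ)^j * ((z/2)^((ν:ℂ)+1) * (z/2)^(2*j)) := by
    intro j
    have e1 : z^(2*(j+N)) = z^(2*j) * z^(2*N) := by rw [← pow_add]; congr 1; ring
    have e2 : z^(((ν:ℂ) - 2*(N:ℂ))+1) * z^(2*N) = z^((ν:ℂ)+1) := by
      rw [← Complex.cpow_natCast z (2*N), ← Complex.cpow_add _ _ hzne]
      congr 1
      push_cast
      ring
    calc z^(((ν:ℂ) - 2*(N:ℂ))+1) * z^(2*(j+N))
        = (z^(((ν:ℂ) - 2*(N:ℂ))+1) * z^(2*N)) * z^(2*j) := by rw [e1]; ring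
      _ = z^((ν:ℂ)+1) * z^(2*j) := by rw [e2]
      _ = (2:ℂ)^((ν:ℂ)+1) * (4:ℂ)^j * ((z/2)^((ν:ℂ)+1) * (z/2)^(2*j)) := by
          rw [e3, e4 j]; ring
  have hp2 : ∀ i : ℕ, i < N → z^(((ν:ℂ) - 2*(N:ℂ))+1) * z^(2*(N-1-i))
      = (2:ℂ)^((ν:ℂ) - 2*i - 1) * (z/2)^((ν:ℂ) - 2*i - 1) := by
    intro i hi
    have hcast : (((N-1-i) : ℕ):ℂ) = (N:ℂ) - 1 - (i:ℂ) := by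
      have h' : (((N-1-i) : ℕ):ℝ) = (N:ℝ) - 1 - (i:ℝ) := by
        rw [Nat.cast_sub (by omega), Nat.cast_sub (by omega)]
        push_cast
        ring
      calc (((N-1-i) : ℕ):ℂ) = ((((N-1-i) : ℕ):ℝ):ℂ) := by push_cast; ring
        _ = (N:ℂ) - 1 - (i:ℂ) := by rw [h']; push_cast; ring
    have e2 : z^(((ν:ℂ) - 2*(N:ℂ))+1) * z^(2*(N-1-i)) = z^((ν:ℂ) - 2*i - 1) := by
      rw [← Complex.cpow_natCast z (2*(N-1-i)), ← Complex.cpow_add _ _ hzne]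
      congr 1
      push_cast [hcast]
      ring
    rw [e2]
    have h := ofReal_two_mul_cpow hwne ((ν:ℂ) - 2*i - 1)
    rw [show (((2:ℝ):ℂ) * (z/2)) = z by push_cast; ring] at h
    rw [h]
    norm_num
  have h2c1 : (2:ℂ)^((1:ℂ) - ((ν:ℂ) - 2*(N:ℂ))) ≠ 0 := by
    intro h
    exact two_ne_zero ((Complex.cpow_eq_zero_iff _ _).mp h).1
  have hΓN : Complex.Gamma ((N:ℂ) + 1/2) ≠ 0 := by
    rw [show ((N:ℂ) + 1/2) = (((N:ℝ) + 1/2 : ℝ):ℂ) by push_cast; ring]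
    exact gamma_cast_ne (by rw [Complex.ofReal_re]; positivity)
  -- tail terms agree with Struve terms
  have hterm : ∀ j : ℕ, f (j + N) = T j := by
    intro j
    have hE := E1_id hν N h2N j
    have ha := hLC (N+j+1)
    have hp := hp1 j
    rw [hf, hT]
    simp only []
    rw [show (j+N)+1 = N+j+1 by omega, pow_add, hB]
    rw [div_mul_eq_mul_div, div_mul_div_comm, ← mul_div_assoc]
    rw [div_eq_div_iff (mul_ne_zero (mul_ne_zero hπ hΓb) ha)
      (mul_ne_zero (hΓc j) (hΓd j))]
    linear_combination ((2:ℂ)^((1:ℂ) - ((ν:ℂ) - 2*(N:ℂ))) * Complex.Gamma ((N:ℂ) + 1/2)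
        * (-1:ℂ)^N * (-1:ℂ)^j
        * (Complex.Gamma ((j:ℂ)+3/2) * Complex.Gamma ((j:ℂ)+ν+3/2))) * hp
      + ((-1:ℂ)^j * ((z/2)^((ν:ℂ)+1) * (z/2)^(2*j))) * hE
  -- summability
  have hTs : Summable T := by
    rw [hT]
    exact (summable_struve_terms ν hν (z/2)).mul_left _
  have hfs : Summable f :=
    (summable_nat_add_iff N).mp (hTs.congr (fun j => (hterm j).symm))
  -- struve as tsum of T
  have hHT : struveH (ν:ℂ) z = ∑' j, T j := by
    unfold struveH
    simp only [hT]
    rw [tsum_mul_left]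
  -- B * lommels = tsum of f
  have hBl : Bcoef ν * lommels ((muTilde ν : ℝ):ℂ) ν z = ∑' k, f k := by
    unfold lommels
    simp only [hf, hμ]
    rw [← mul_assoc, ← tsum_mul_left]
  -- finite part is -pStruve
  have hfin : ∑ i ∈ Finset.range N, f i = - pStruve ν z := by
    unfold pStruve
    rw [← hN, ← Finset.sum_range_reflect, Finset.mul_sum, ← Finset.sum_neg_distrib]
    refine Finset.sum_congr rfl (fun i hi => ?_)
    have hiN : i < N := Finset.mem_range.mp hi
    have hE := E2_id hν N h2N i hiN
    have ha := hLC (N-i)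
    have haj : N-1-i+1 = N-i := by omega
    have hp := hp2 i hiN
    have hΓe' := hΓe i (by exact_mod_cast hiN)
    rw [hf]
    simp only []
    rw [haj, hB]
    have hneg : ∀ A B : ℂ, B ≠ 0 →
        -((1/(Real.pi:ℂ)) * (A/B)) = (-A)/((Real.pi:ℂ)*B) := by
      intro A B hBne
      field_simp
    rw [hneg _ _ hΓe']
    rw [div_mul_eq_mul_div, div_mul_div_comm]
    rw [div_eq_div_iff (mul_ne_zero (mul_ne_zero hπ hΓb) ha)
      (mul_ne_zero hπ hΓe')]
    linear_combination ((2:ℂ)^((1:ℂ) - ((ν:ℂ) - 2*(N:ℂ))) * Complex.Gamma ((N:ℂ) + 1/2)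
        * (-1:ℂ)^(N-1-i) * ((Real.pi:ℂ) * Complex.Gamma ((ν:ℂ) + 1/2 - i))) * hp
      + ((Real.pi:ℂ) * (z/2)^((ν:ℂ) - 2*i - 1)) * hE
  -- assemble
  rw [hS0, hHT, hBl, ← Summable.sum_add_tsum_nat_add N hfs, hfin, tsum_congr hterm]
  ring
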